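/- Let (m,n) be a coprime pair of positive integers and let R ≠ R_0 = {0,1,…,m+n−1} be the rank set of an (m,n)-Dyck path with SW-sequence σ. Let s = σ^{-1}(W_1) be the position of the first W in σ, δ = δ(R) = |R ∩ {0,1,…,m+n}|, and key(R) = |S(R) ∩ {0,1,…,m+n}|. Then the SW-sequence σ^L of ℒ(R) is obtained from σ by inserting a letter W immediately after the key(R)-th S of σ (equivalently, immediately after position δ) and then deleting the W at position s. -/

import Mathlib

/-- The list of ranks of the lattice points visited by a path (excluding the final
point), starting from rank `r`.  A `true` entry is a north (`u`) step, which adds `m`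
to the rank; a `false` entry is an east (`d`) step, which subtracts `n`. -/
def rankWalk (m n : ℤ) : List Bool → ℤ → List ℤ
  | [], _ => []
  | b :: bs, r => r :: rankWalk m n bs (r + if b then m else -n)

/-- An `(m,n)`-path: a word of `n` north steps (`true`) and `m` east steps (`false`). -/
def IsPathWord (m n : ℕ) (P : List Bool) : Prop :=
  P.length = m + n ∧ P.count true = n

/-- An `(m,n)`-Dyck path: an `(m,n)`-path all of whose ranks are nonnegative. -/
def IsDyckWord (m n : ℕ) (P : List Bool) : Prop :=
  IsPathWord m n P ∧ ∀ r ∈ rankWalk (m : ℤ) (n : ℤ) P 0, 0 ≤ r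

/-- The rank set of a path: the ranks of its `m+n` lattice points other than the endpoint. -/
def rankSet (m n : ℕ) (P : List Bool) : Finset ℤ :=
  (rankWalk (m : ℤ) (n : ℤ) P 0).toFinset

/-- `R` is the rank set of some `(m,n)`-path. -/
def IsRankSet (m n : ℕ) (R : Finset ℤ) : Prop :=
  ∃ P : List Bool, IsPathWord m n P ∧ rankSet m n P = R

/-- `R` is the rank set of some `(m,n)`-Dyck path. -/
def IsDyckRankSet (m n : ℕ) (R : Finset ℤ) : Prop :=
  ∃ P : List Bool, IsDyckWord m n P ∧ rankSet m n P = R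

/-- The SW-sequence of a (Dyck path) rank set `R`, reading the sorted ranks from left
to right: `true` (= the letter `S`) at rank `r` iff `r + m ∈ R`, i.e. `r ∈ S(R) = R ∩ (R - m)`;
otherwise `false` (= the letter `W`). -/
def swSeq (m : ℕ) (R : Finset ℤ) : List Bool :=
  (R.sort (· ≤ ·)).map (fun r => decide (r + (m : ℤ) ∈ R))

/-- The 1-based position of the `j`-th (1-based) occurrence of the letter `b` in the
word `w`; e.g. `nthPos w false j` is the position `σ⁻¹(W_j)` of the `j`-th `W`. -/
def nthPos (w : List Bool) (b : Bool) (j : ℕ) : ℕ :=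
  ((List.range w.length).filter (fun p => w.getD p (!b) == b)).getD (j - 1) 0 + 1

/-- The rank set `R₀ = {0, 1, …, m+n-1}` of the unique Dyck path of area `0`. -/
def baseRankSet (m n : ℕ) : Finset ℤ :=
  (Finset.range (m + n)).image (fun i : ℕ => (i : ℤ))

/-- The left operation `ℒ(R) = ((R \ {0}) ∪ {m+n}) - min (R \ {0})`. -/
def leftOp (m n : ℕ) (R : Finset ℤ) : Finset ℤ :=
  ((R.erase 0) ∪ {((m : ℤ) + n)}).image
    (fun r => r - WithTop.untopD 0 (R.erase 0).min)

/-- `δ(R) = |R ∩ {0, 1, …, m+n}|`. -/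
def deltaStat (m n : ℕ) (R : Finset ℤ) : ℕ :=
  (R.filter (fun r => 0 ≤ r ∧ r ≤ (m : ℤ) + n)).card

/-- `key(R) = |S(R) ∩ {0, 1, …, m+n}|`, where `S(R) = R ∩ (R - m)`. -/
def keyStat (m n : ℕ) (R : Finset ℤ) : ℕ :=
  (R.filter (fun r => r + (m : ℤ) ∈ R ∧ 0 ≤ r ∧ r ≤ (m : ℤ) + n)).card

/-!
All ranks of a Dyck rank set `R` are nonnegative, `0, m, n ∈ R`, and by coprimality
`m + n, 2m + n ∉ R`; moreover every `W`-rank is at least `n`, since the east step leaving it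
must land on a nonnegative rank. Hence the sorted ranks are `0 < A < n < B < m + n < C`, and
`σ = S^t W M N` with `t = |A| + 1`, where `M` and `N` are the letters of `B` and `C`.
Up to a translation, which does not change SW-sequences, `ℒ(R)` has the ranks
`A < n < B < m + n < C`, with the same letters as in `R` except that `n` now reads `S` and the
new rank `m + n` reads `W`; so `σ^L = S^t M W N`. Since `δ = t + 1 + |M|`, the first `W` sits at
position `t + 1`, and only `W`s separate the `key`-th `S` from position `δ`, both descriptions
produce this word.
-/

def rankWalkEnd (m n : ℤ) : List Bool → ℤ → ℤ
  | [], r => r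
  | b :: bs, r => rankWalkEnd m n bs (r + if b then m else -n)

section RankWalk

variable {m n : ℤ}

theorem rankWalkEnd_eq (P : List Bool) (r : ℤ) :
    rankWalkEnd m n P r = r + m * P.count true - n * P.count false := by
  induction P generalizing r with
  | nil => simp [rankWalkEnd]
  | cons b bs ih => cases b <;> simp [rankWalkEnd, ih] <;> ring

theorem mem_rankWalk_or_eq_rankWalkEnd (P : List Bool) (r : ℤ) :
    r ∈ rankWalk m n P r ∨ r = rankWalkEnd m n P r := by
  cases P <;> simp [rankWalk, rankWalkEnd]

theorem exists_eq_of_mem_rankWalk (P : List Bool) (r₀ : ℤ) {r : ℤ} (hr : r ∈ rankWalk m n P r₀) :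
    ∃ a b : ℕ, a ≤ P.count true ∧ r = r₀ + m * a - n * b := by
  induction P generalizing r₀ with
  | nil => simp [rankWalk] at hr
  | cons c P ih =>
    rcases List.mem_cons.mp hr with rfl | hr
    · exact ⟨0, 0, Nat.zero_le _, by ring⟩
    obtain ⟨a, b, ha, rfl⟩ := ih _ hr
    cases c
    · exact ⟨a, b + 1, by simpa using ha, by push_cast; ring⟩
    · exact ⟨a + 1, b, by simpa [List.count_cons] using ha, by simp only [if_true]; push_cast; ring⟩

theorem exists_next_of_mem_rankWalk (P : List Bool) (r₀ : ℤ) {r : ℤ} (hr : r ∈ rankWalk m n P r₀) :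
    ∃ s, (s ∈ rankWalk m n P r₀ ∨ s = rankWalkEnd m n P r₀) ∧ (s = r + m ∨ s = r - n) := by
  induction P generalizing r₀ with
  | nil => simp [rankWalk] at hr
  | cons c P ih =>
    rcases List.mem_cons.mp hr with rfl | hr
    · refine ⟨r + if c then m else -n, ?_, by cases c <;> simp [sub_eq_add_neg]⟩
      exact (mem_rankWalk_or_eq_rankWalkEnd P _).imp_left (List.mem_cons_of_mem _)
    obtain ⟨s, hs, hsr⟩ := ih _ hr
    exact ⟨s, hs.imp_left (List.mem_cons_of_mem _), hsr⟩

theorem exists_prev_rankWalkEnd {P : List Bool} (hP : P ≠ []) (r₀ : ℤ) :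
    ∃ r ∈ rankWalk m n P r₀, rankWalkEnd m n P r₀ = r + m ∨ rankWalkEnd m n P r₀ = r - n := by
  induction P generalizing r₀ with
  | nil => exact absurd rfl hP
  | cons c P ih =>
    rcases eq_or_ne P [] with rfl | hP'
    · exact ⟨r₀, by simp [rankWalk], by cases c <;> simp [rankWalkEnd, sub_eq_add_neg]⟩
    obtain ⟨r, hr, h⟩ := ih hP' (r₀ + if c then m else -n)
    exact ⟨r, List.mem_cons_of_mem _ hr, h⟩

end RankWalk

theorem Int.mul_sub_mul_ne_mul_add {m n a b k : ℕ} (hn : 0 < n) (hcop : Nat.Coprime m n)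
    (ha : a ≤ n) (hk : 0 < k) : (m * a - n * b : ℤ) ≠ k * m + n := by
  intro h
  have heq : (m : ℤ) * (a - k) = n * (b + 1) := by linarith
  have hdvd : (n : ℤ) ∣ a - k :=
    (Nat.isCoprime_iff_coprime.mpr hcop).symm.dvd_of_dvd_mul_left (Dvd.intro _ heq.symm)
  have hpos : (0 : ℤ) < a - k := pos_of_mul_pos_right (heq ▸ by positivity) (Nat.cast_nonneg m)
  have := Int.le_of_dvd hpos hdvd
  omega

theorem IsPathWord.rankWalkEnd_eq_zero {m n : ℕ} {P : List Bool} (hP : IsPathWord m n P) :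
    rankWalkEnd m n P 0 = 0 := by
  obtain ⟨hlen, hcount⟩ := hP
  have hfalse : P.count false = m := by
    have := List.count_false_add_count_true P
    omega
  rw [rankWalkEnd_eq, hcount, hfalse]
  ring

theorem IsRankSet.mul_add_notMem {m n k : ℕ} {R : Finset ℤ} (hR : IsRankSet m n R) (hn : 0 < n)
    (hcop : Nat.Coprime m n) (hk : 0 < k) : (k * m + n : ℤ) ∉ R := by
  obtain ⟨P, hP, rfl⟩ := hR
  intro h
  obtain ⟨a, b, ha, hab⟩ :=
    exists_eq_of_mem_rankWalk P 0 (List.mem_toFinset.mp h)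
  rw [hP.2] at ha
  exact Int.mul_sub_mul_ne_mul_add (b := b) hn hcop ha hk (by linarith)

namespace IsDyckRankSet

variable {m n : ℕ} {R : Finset ℤ}

theorem isRankSet (hR : IsDyckRankSet m n R) : IsRankSet m n R :=
  let ⟨P, hP, hPR⟩ := hR
  ⟨P, hP.1, hPR⟩

theorem nonneg (hR : IsDyckRankSet m n R) {r : ℤ} (hr : r ∈ R) : 0 ≤ r := by
  obtain ⟨P, hP, rfl⟩ := hR
  exact hP.2 r (List.mem_toFinset.mp hr)

/-- `s` is the next point of the path; it is its endpoint, of rank `0`, when `r` is the last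
rank. -/
theorem exists_next_rank (hR : IsDyckRankSet m n R) {r : ℤ} (hr : r ∈ R) :
    ∃ s, (s ∈ R ∨ s = 0) ∧ (s = r + m ∨ s = r - n) := by
  obtain ⟨P, hP, rfl⟩ := hR
  obtain ⟨s, hs, hsr⟩ := exists_next_of_mem_rankWalk P 0 (List.mem_toFinset.mp hr)
  rw [hP.1.rankWalkEnd_eq_zero] at hs
  exact ⟨s, hs.imp_left List.mem_toFinset.mpr, hsr⟩

theorem zero_mem (hR : IsDyckRankSet m n R) (hn : 0 < n) : (0 : ℤ) ∈ R := by
  obtain ⟨P, hP, rfl⟩ := hR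
  obtain _ | ⟨c, P'⟩ := P
  · have : 0 = m + n := hP.1.1
    omega
  · simp [rankSet, rankWalk]

theorem m_mem (hR : IsDyckRankSet m n R) (hn : 0 < n) : (m : ℤ) ∈ R := by
  obtain ⟨s, hs, hsr⟩ := hR.exists_next_rank (hR.zero_mem hn)
  rcases hsr with rfl | rfl
  · rcases hs with hs | hs
    · simpa using hs
    · obtain rfl : m = 0 := by omega
      simpa using hR.zero_mem hn
  · rcases hs with hs | hs
    · have := hR.nonneg hs
      omega
    · omega

theorem n_mem (hR : IsDyckRankSet m n R) (hm : 0 < m) : (n : ℤ) ∈ R := by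
  obtain ⟨P, hP, rfl⟩ := hR
  have hne : P ≠ [] := by
    rintro rfl
    have : 0 = m + n := hP.1.1
    omega
  obtain ⟨r, hr, hend⟩ := exists_prev_rankWalkEnd (m := m) (n := n) hne 0
  rw [hP.1.rankWalkEnd_eq_zero] at hend
  have := hP.2 r hr
  rcases hend with h | h
  · omega
  · rw [show (n : ℤ) = r by omega]
    exact List.mem_toFinset.mpr hr

theorem n_le_of_add_notMem (hR : IsDyckRankSet m n R) {r : ℤ} (hr : r ∈ R)
    (hrm : r + m ∉ R) : n ≤ r := by
  obtain ⟨s, hs, hsr⟩ := hR.exists_next_rank hr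
  have hr0 := hR.nonneg hr
  rcases hsr with rfl | rfl
  · rcases hs with hs | hs
    · exact absurd hs hrm
    · exact absurd (show r + m ∈ R by rwa [show r + m = r by omega]) hrm
  · rcases hs with hs | hs
    · have := hR.nonneg hs
      omega
    · omega

theorem m_add_n_notMem (hR : IsDyckRankSet m n R) (hn : 0 < n) (hcop : Nat.Coprime m n) :
    (m + n : ℤ) ∉ R := by
  simpa using hR.isRankSet.mul_add_notMem hn hcop (k := 1) one_pos

theorem m_add_n_add_m_notMem (hR : IsDyckRankSet m n R) (hn : 0 < n) (hcop : Nat.Coprime m n) :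
    (m + n + m : ℤ) ∉ R := by
  rw [show (m + n + m : ℤ) = (2 : ℕ) * m + n by push_cast; ring]
  exact hR.isRankSet.mul_add_notMem hn hcop two_pos

end IsDyckRankSet

theorem Finset.pairwise_lt_sort {α : Type*} [LinearOrder α] (s : Finset α) :
    (s.sort (· ≤ ·)).Pairwise (· < ·) :=
  (Finset.sortedLT_sort s).pairwise

theorem Finset.sort_eq_of_pairwise_lt {α : Type*} [LinearOrder α] {s : Finset α} {l : List α}
    (hl : l.Pairwise (· < ·)) (hmem : ∀ x, x ∈ l ↔ x ∈ s) : s.sort (· ≤ ·) = l := by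
  obtain rfl : l.toFinset = s := by ext x; simp [hmem]
  exact (List.toFinset_sort _ hl.nodup).mpr (hl.imp le_of_lt)

theorem Finset.card_filter_eq_countP_sort {α : Type*} [LinearOrder α] (s : Finset α)
    (p : α → Prop) [DecidablePred p] :
    (s.filter p).card = (s.sort (· ≤ ·)).countP (fun x => decide (p x)) := by
  rw [Finset.card, Finset.filter_val, ← Multiset.countP_eq_card_filter, ← Finset.sort_eq s (· ≤ ·),
    Multiset.coe_countP]

theorem swSeq_image_sub (m : ℕ) (R : Finset ℤ) (c : ℤ) :
    swSeq m (R.image (· - c)) = swSeq m R := by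
  have hmap : R.image (· - c) = R.map (Equiv.subRight c).toEmbedding := by
    rw [Finset.map_eq_image]
    rfl
  have hmono : StrictMonoOn (Equiv.subRight c).toEmbedding R := fun a _ b _ h => by simpa using h
  rw [swSeq, swSeq, hmap, ← hmono.map_finsetSort, List.map_map]
  refine List.map_congr_left fun x _ => ?_
  simp [Finset.mem_map_equiv, sub_add_eq_add_sub]

def lowRanks (n : ℕ) (R : Finset ℤ) : List ℤ :=
  (R.filter (fun x : ℤ => 0 < x ∧ x < n)).sort (· ≤ ·)

def midRanks (m n : ℕ) (R : Finset ℤ) : List ℤ :=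
  (R.filter (fun x : ℤ => n < x ∧ x < m + n)).sort (· ≤ ·)

def highRanks (m n : ℕ) (R : Finset ℤ) : List ℤ :=
  (R.filter (fun x : ℤ => m + n < x)).sort (· ≤ ·)

section RankLists

variable {m n : ℕ} {R : Finset ℤ} {x : ℤ}

@[simp]
theorem mem_lowRanks : x ∈ lowRanks n R ↔ x ∈ R ∧ 0 < x ∧ x < n := by
  simp [lowRanks]

@[simp]
theorem mem_midRanks : x ∈ midRanks m n R ↔ x ∈ R ∧ n < x ∧ x < m + n := by
  simp [midRanks]

@[simp]
theorem mem_highRanks : x ∈ highRanks m n R ↔ x ∈ R ∧ m + n < x := by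
  simp [highRanks]

end RankLists

namespace IsDyckRankSet

variable {m n : ℕ} {R : Finset ℤ}

theorem sort_eq (hR : IsDyckRankSet m n R) (hm : 0 < m) (hn : 0 < n) (hcop : Nat.Coprime m n) :
    R.sort (· ≤ ·) = 0 :: (lowRanks n R ++ (n : ℤ) :: (midRanks m n R ++ highRanks m n R)) := by
  have hmn := hR.m_add_n_notMem hn hcop
  apply Finset.sort_eq_of_pairwise_lt
  · simp only [lowRanks, midRanks, highRanks, List.pairwise_cons, List.pairwise_append,
      Finset.pairwise_lt_sort, List.mem_append, Finset.mem_sort, Finset.mem_filter, List.mem_cons,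
      and_imp, true_and, forall_eq_or_imp]
    grind
  · intro x
    have h0 := hR.zero_mem hn
    have hnR := hR.n_mem hm
    have hx := hR.nonneg (r := x)
    simp only [List.mem_cons, List.mem_append, mem_lowRanks, mem_midRanks, mem_highRanks]
    grind

theorem sort_erase_zero_union_eq (hR : IsDyckRankSet m n R) (hm : 0 < m) (hn : 0 < n) :
    (R.erase 0 ∪ {(m + n : ℤ)}).sort (· ≤ ·) =
      lowRanks n R ++ (n : ℤ) :: (midRanks m n R ++ (m + n : ℤ) :: highRanks m n R) := by
  apply Finset.sort_eq_of_pairwise_lt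
  · simp only [lowRanks, midRanks, highRanks, List.pairwise_cons, List.pairwise_append,
      Finset.pairwise_lt_sort, List.mem_append, Finset.mem_sort, Finset.mem_filter, List.mem_cons,
      and_imp, true_and, forall_eq_or_imp, imp_self, implies_true, and_self]
    grind
  · intro x
    have hnR := hR.n_mem hm
    have hx := hR.nonneg (r := x)
    simp only [List.mem_append, mem_lowRanks, List.mem_cons, mem_midRanks, mem_highRanks,
      Finset.mem_union, Finset.mem_singleton, Finset.mem_erase]
    grind

theorem add_m_mem_of_mem_lowRanks (hR : IsDyckRankSet m n R) {x : ℤ} (hx : x ∈ lowRanks n R) :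
    x + m ∈ R := by
  rw [mem_lowRanks] at hx
  by_contra h
  have := hR.n_le_of_add_notMem hx.1 h
  omega

theorem map_lowRanks (hR : IsDyckRankSet m n R) :
    (lowRanks n R).map (fun r : ℤ => decide (r + m ∈ R)) =
      List.replicate (lowRanks n R).length true :=
  List.eq_replicate_iff.mpr ⟨by simp, by simpa using fun x => hR.add_m_mem_of_mem_lowRanks (x := x)⟩

theorem swSeq_eq (hR : IsDyckRankSet m n R) (hm : 0 < m) (hn : 0 < n) (hcop : Nat.Coprime m n) :
    swSeq m R = List.replicate ((lowRanks n R).length + 1) true ++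
      false :: ((midRanks m n R).map (fun r : ℤ => decide (r + m ∈ R)) ++
        (highRanks m n R).map (fun r : ℤ => decide (r + m ∈ R))) := by
  rw [swSeq, hR.sort_eq hm hn hcop]
  simp [hR.map_lowRanks, hR.m_mem hn, add_comm (n : ℤ), hR.m_add_n_notMem hn hcop,
    List.replicate_succ]

/-- Removing the rank `0` and adding the rank `m + n` changes only the letters at `n`, which
becomes an `S`, and at `m + n`, which is a `W`. -/
theorem swSeq_leftOp_eq (hR : IsDyckRankSet m n R) (hm : 0 < m) (hn : 0 < n)
    (hcop : Nat.Coprime m n) :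
    swSeq m (leftOp m n R) = List.replicate ((lowRanks n R).length + 1) true ++
      (midRanks m n R).map (fun r : ℤ => decide (r + m ∈ R)) ++
        false :: (highRanks m n R).map (fun r : ℤ => decide (r + m ∈ R)) := by
  set U := R.erase 0 ∪ {(m + n : ℤ)}
  have hletter : ∀ l : List ℤ, (∀ x ∈ l, 0 < x ∧ x ≠ n) →
      l.map (fun x : ℤ => decide (x + m ∈ U)) = l.map (fun r : ℤ => decide (r + m ∈ R)) := by
    refine fun l hl => List.map_congr_left fun x hx => ?_
    have := hl x hx
    simp only [U, Finset.mem_union, Finset.mem_erase, Finset.mem_singleton]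
    grind
  have hnS : decide ((n : ℤ) + m ∈ U) = true :=
    decide_eq_true (Finset.mem_union_right _ (by rw [Finset.mem_singleton, add_comm]))
  have hmnW : decide ((m + n : ℤ) + m ∈ U) = false := by
    rw [decide_eq_false_iff_not, Finset.mem_union, Finset.mem_singleton, Finset.mem_erase, not_or]
    exact ⟨fun h => hR.m_add_n_add_m_notMem hn hcop h.2, by omega⟩
  rw [leftOp, swSeq_image_sub, swSeq, hR.sort_erase_zero_union_eq hm hn, List.map_append,
    List.map_cons, List.map_append, List.map_cons,
    hletter _ fun x hx => by rw [mem_lowRanks] at hx; omega,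
    hletter _ fun x hx => by rw [mem_midRanks] at hx; omega,
    hletter _ fun x hx => by rw [mem_highRanks] at hx; omega, hR.map_lowRanks, hnS, hmnW]
  simp [List.replicate_succ']

theorem deltaStat_eq (hR : IsDyckRankSet m n R) (hm : 0 < m) (hn : 0 < n)
    (hcop : Nat.Coprime m n) :
    deltaStat m n R = (lowRanks n R).length + 1 + 1 + (midRanks m n R).length := by
  set p : ℤ → Bool := fun x => decide (0 ≤ x ∧ x ≤ m + n)
  have hlow : (lowRanks n R).countP p = (lowRanks n R).length :=
    List.countP_eq_length.mpr fun x hx => by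
      rw [mem_lowRanks] at hx
      exact decide_eq_true (by omega)
  have hmid : (midRanks m n R).countP p = (midRanks m n R).length :=
    List.countP_eq_length.mpr fun x hx => by
      rw [mem_midRanks] at hx
      exact decide_eq_true (by omega)
  have hhigh : (highRanks m n R).countP p = 0 :=
    List.countP_eq_zero.mpr fun x hx => by
      rw [mem_highRanks] at hx
      rw [decide_eq_true_iff]
      omega
  rw [deltaStat, Finset.card_filter_eq_countP_sort, hR.sort_eq hm hn hcop]
  show List.countP p _ = _
  have hp0 : p 0 = true := decide_eq_true (by omega)
  have hpn : p n = true := decide_eq_true (by omega)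
  rw [List.countP_cons_of_pos hp0, List.countP_append, List.countP_cons_of_pos hpn,
    List.countP_append, hlow, hmid, hhigh]
  omega

theorem keyStat_eq (hR : IsDyckRankSet m n R) (hm : 0 < m) (hn : 0 < n)
    (hcop : Nat.Coprime m n) :
    keyStat m n R = (lowRanks n R).length + 1 +
      ((midRanks m n R).map (fun r : ℤ => decide (r + m ∈ R))).count true := by
  set p : ℤ → Bool := fun x => decide (x + m ∈ R ∧ 0 ≤ x ∧ x ≤ m + n)
  have hlow : (lowRanks n R).countP p = (lowRanks n R).length :=
    List.countP_eq_length.mpr fun x hx => by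
      have hxm := hR.add_m_mem_of_mem_lowRanks hx
      rw [mem_lowRanks] at hx
      exact decide_eq_true ⟨hxm, by omega, by omega⟩
  have hmid : (midRanks m n R).countP p =
      ((midRanks m n R).map (fun r : ℤ => decide (r + m ∈ R))).count true := by
    rw [List.count, List.countP_map]
    refine List.countP_congr fun x hx => ?_
    rw [mem_midRanks] at hx
    simp only [p, Function.comp_apply, decide_eq_true_eq, beq_iff_eq]
    exact ⟨And.left, fun h => ⟨h, by omega, by omega⟩⟩
  have hhigh : (highRanks m n R).countP p = 0 :=
    List.countP_eq_zero.mpr fun x hx => by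
      rw [mem_highRanks] at hx
      rw [decide_eq_true_iff]
      omega
  have hp0 : p 0 = true := decide_eq_true ⟨by simpa using hR.m_mem hn, le_rfl, by omega⟩
  have hpn : ¬p n = true := fun h =>
    hR.m_add_n_notMem hn hcop (add_comm (n : ℤ) m ▸ (of_decide_eq_true h).1)
  rw [keyStat, Finset.card_filter_eq_countP_sort, hR.sort_eq hm hn hcop]
  show List.countP p _ = _
  rw [List.countP_cons_of_pos hp0, List.countP_append, List.countP_cons_of_neg hpn,
    List.countP_append, hlow, hmid, hhigh]
  omega

end IsDyckRankSet

def letterPositions (w : List Bool) (b : Bool) : List ℕ :=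
  (List.range w.length).filter (fun p => w.getD p (!b) == b)

theorem letterPositions_cons (a : Bool) (w : List Bool) (b : Bool) :
    letterPositions (a :: w) b =
      (if a = b then [0] else []) ++ (letterPositions w b).map (· + 1) := by
  rw [letterPositions, List.length_cons, List.range_succ_eq_map, List.filter_cons,
    List.filter_map]
  cases a <;> cases b <;> simp [letterPositions, Function.comp_def]

theorem getElem?_letterPositions_append_cons (u v : List Bool) (b : Bool) :
    (letterPositions (u ++ b :: v) b)[u.count b]? = some u.length := by
  induction u with
  | nil => simp [letterPositions_cons]
  | cons a u ih =>
    rw [List.cons_append, letterPositions_cons, List.count_cons]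
    by_cases hab : a = b <;> simp [hab, ih]

theorem nthPos_append_cons (u v : List Bool) (b : Bool) :
    nthPos (u ++ b :: v) b (u.count b + 1) = u.length + 1 := by
  show (letterPositions _ b).getD (u.count b + 1 - 1) 0 + 1 = _
  rw [Nat.add_sub_cancel, List.getD_eq_getElem?_getD, getElem?_letterPositions_append_cons]
  rfl

theorem List.eq_replicate_false_or_eq_append_true_replicate (M : List Bool) :
    (∃ k, M = replicate k false) ∨ ∃ M₁ k, M = M₁ ++ true :: replicate k false := by
  induction M using List.reverseRecOn with
  | nil => exact .inl ⟨0, rfl⟩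
  | append_singleton M a ih =>
    cases a
    · rcases ih with ⟨k, rfl⟩ | ⟨M₁, k, rfl⟩
      · exact .inl ⟨k + 1, by simp [List.replicate_succ']⟩
      · exact .inr ⟨M₁, k + 1, by simp [List.replicate_succ']⟩
    · exact .inr ⟨M, 0, rfl⟩

theorem List.take_append_cons_drop_of_replicate {α : Type*} (u v : List α) (a : α) {j k : ℕ}
    (hjk : j ≤ k) :
    (u ++ replicate k a ++ v).take (u.length + j) ++ a :: (u ++ replicate k a ++ v).drop
      (u.length + j) = u ++ replicate (k + 1) a ++ v := by
  obtain ⟨i, rfl⟩ := Nat.exists_eq_add_of_le hjk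
  rw [List.append_assoc, List.take_length_add_append, List.drop_length_add_append,
    List.take_append_of_le_length (by simp), List.drop_append_of_le_length (by simp)]
  simp only [List.take_replicate, List.drop_replicate, min_eq_left (Nat.le_add_right j i),
    Nat.add_sub_cancel_left, List.append_assoc, ← List.cons_append, ← List.replicate_succ]
  rw [← List.append_assoc (replicate j a), List.replicate_append_replicate]
  rfl

section SWWord

open List

variable (t : ℕ) (M N : List Bool)

theorem nthPos_replicate_true_false_one (z : List Bool) :
    nthPos (replicate t true ++ false :: z) false 1 = t + 1 := by
  simpa [List.count_replicate] using nthPos_append_cons (replicate t true) z false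

theorem insert_false_eraseIdx :
    let w := replicate t true ++ false :: (M ++ N)
    (w.take (t + 1 + M.length) ++ false :: w.drop (t + 1 + M.length)).eraseIdx
      (nthPos w false 1 - 1) = replicate t true ++ M ++ false :: N := by
  intro w
  have hlen : (replicate t true ++ false :: M).length = t + 1 + M.length := by
    simp only [length_append, length_replicate, length_cons]
    omega
  have hw : w = (replicate t true ++ false :: M) ++ N := by simp [w]
  rw [nthPos_replicate_true_false_one, hw, List.take_left' hlen, List.drop_left' hlen]
  simp [List.eraseIdx_append_of_length_le]

theorem insert_false_after_nthPos_true (ht : 0 < t) :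
    let w := replicate t true ++ false :: (M ++ N)
    let p := nthPos w true (t + M.count true)
    w.take p ++ false :: w.drop p =
      w.take (t + 1 + M.length) ++ false :: w.drop (t + 1 + M.length) := by
  intro w p
  -- Only `W`s follow the last `S` of `M`, or the `t`-th `S` when `M` has none.
  rcases M.eq_replicate_false_or_eq_append_true_replicate with ⟨k, rfl⟩ | ⟨M₁, k, rfl⟩
  · have hw : w = replicate t true ++ replicate (k + 1) false ++ N := by
      simp [w, List.replicate_succ]
    have hp : p = (replicate t true).length + 0 := by
      obtain ⟨s, rfl⟩ := Nat.exists_eq_add_of_lt ht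
      simpa [p, w, List.replicate_succ', List.count_replicate] using
        nthPos_append_cons (replicate s true) (false :: (replicate k false ++ N)) true
    have hq : t + 1 + (replicate k false).length = (replicate t true).length + (k + 1) := by
      simp only [length_replicate]
      omega
    rw [hp, hq, hw]
    exact (List.take_append_cons_drop_of_replicate _ N false (Nat.zero_le _)).trans
      (List.take_append_cons_drop_of_replicate _ N false le_rfl).symm
  · set u := replicate t true ++ false :: M₁
    have hw : w = (u ++ [true]) ++ replicate k false ++ N := by simp [w, u]
    have hp : p = (u ++ [true]).length + 0 := by
      simpa [p, w, u, List.count_replicate, Nat.add_assoc] using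
        nthPos_append_cons u (replicate k false ++ N) true
    have hq : t + 1 + (M₁ ++ true :: replicate k false).length = (u ++ [true]).length + k := by
      simp only [u, length_append, length_cons, length_replicate, length_nil]
      omega
    rw [hp, hq, hw]
    exact (List.take_append_cons_drop_of_replicate _ N false (Nat.zero_le _)).trans
      (List.take_append_cons_drop_of_replicate _ N false le_rfl).symm

end SWWord

theorem swSeq_leftOp_general (m n : ℕ) (hm : 0 < m) (hn : 0 < n) (hcop : Nat.Coprime m n)
    (R : Finset ℤ) (hR : IsDyckRankSet m n R) :
    swSeq m (leftOp m n R) =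
      ((swSeq m R).take (nthPos (swSeq m R) true (keyStat m n R)) ++
        false :: (swSeq m R).drop (nthPos (swSeq m R) true (keyStat m n R))).eraseIdx
        (nthPos (swSeq m R) false 1 - 1) ∧
    swSeq m (leftOp m n R) =
      ((swSeq m R).take (deltaStat m n R) ++
        false :: (swSeq m R).drop (deltaStat m n R)).eraseIdx
        (nthPos (swSeq m R) false 1 - 1) := by
  rw [hR.swSeq_leftOp_eq hm hn hcop, hR.keyStat_eq hm hn hcop, hR.deltaStat_eq hm hn hcop,
    hR.swSeq_eq hm hn hcop]
  set t := (lowRanks n R).length + 1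
  set M := (midRanks m n R).map (fun r : ℤ => decide (r + m ∈ R))
  set N := (highRanks m n R).map (fun r : ℤ => decide (r + m ∈ R))
  have hδ : t + 1 + (midRanks m n R).length = t + 1 + M.length := by simp [M]
  rw [hδ, insert_false_after_nthPos_true t M N (by simp [t]), insert_false_eraseIdx]
  exact ⟨rfl, rfl⟩

/-- Let `R ≠ R₀` be the rank set of an `(m,n)`-Dyck path with
SW-sequence `σ`, let `s = σ⁻¹(W_1)`, `δ = δ(R) = |R ∩ {0,…,m+n}|`, and
`key(R) = |S(R) ∩ {0,…,m+n}|`.  Then the SW-sequence of `ℒ(R)` is obtained from `σ`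
by inserting a `W` immediately after the `key(R)`-th `S` of `σ` (equivalently,
immediately after position `δ`), and then deleting the `W` at position `s`. -/
theorem swSeq_leftOp (m n : ℕ) (hm : 0 < m) (hn : 0 < n) (hcop : Nat.Coprime m n)
    (R : Finset ℤ) (hR : IsDyckRankSet m n R) (hne : R ≠ baseRankSet m n) :
    swSeq m (leftOp m n R) =
      ((swSeq m R).take (nthPos (swSeq m R) true (keyStat m n R)) ++
        false :: (swSeq m R).drop (nthPos (swSeq m R) true (keyStat m n R))).eraseIdx
        (nthPos (swSeq m R) false 1 - 1) ∧
    swSeq m (leftOp m n R) =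
      ((swSeq m R).take (deltaStat m n R) ++
        false :: (swSeq m R).drop (deltaStat m n R)).eraseIdx
        (nthPos (swSeq m R) false 1 - 1) :=
  swSeq_leftOp_general m n hm hn hcop R hR
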